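/- arXiv:2306.10243 — 2 statements merged into one kernel-verified Lean document; each statement's English description precedes it below -/
import Mathlib

section
/- Let A be an admissible domain. Then there exist constants c, C > 0 depending only on d_A such that for all N ∈ ℕ and all z, w ∈ A, |D_N(√N z, √N w)| ≤ C e^{−cN} and |I_N(√N z, √N w)| ≤ C e^{−cN}. -/
open MeasureTheory ProbabilityTheory Filter Topology ComplexConjugate

noncomputable section

/-- The open upper half of the unit disk `𝔻⁺`. -/
def upperHalfDisk : Set ℂ := {z : ℂ | ‖z‖ < 1 ∧ 0 < z.im}

/-- A (plane) domain: a nonempty connected open subset of `ℂ`. -/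
def IsPlaneDomain (A : Set ℂ) : Prop := IsOpen A ∧ IsConnected A

/-- A domain is admissible if its closure is contained in the upper half disk. -/
def IsAdmissible (A : Set ℂ) : Prop := closure A ⊆ upperHalfDisk

/-- `d_A`: the distance between `A` and the boundary of the upper half disk. -/
def dA (A : Set ℂ) : ℝ :=
  sInf {r : ℝ | ∃ z ∈ A, ∃ w ∈ frontier upperHalfDisk, r = dist z w}

/-- Lipschitz domain: near every boundary point, after a rigid motion of the plane,
the set coincides with the subgraph of a Lipschitz function. -/
def IsLipschitzDomain (A : Set ℂ) : Prop :=
  ∀ x ∈ frontier A, ∃ (φ : ℂ ≃ᵃⁱ[ℝ] ℂ) (K : NNReal) (f : ℝ → ℝ) (ε : ℝ),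
    0 < ε ∧ LipschitzWith K f ∧
      ∀ y ∈ Metric.ball x ε, (y ∈ A ↔ (φ y).im < f ((φ y).re))

/-- `ℓ(∂A)`: the one-dimensional Hausdorff measure of the boundary of `A`. -/
def boundaryLength (A : Set ℂ) : ℝ :=
  ((MeasureTheory.Measure.hausdorffMeasure 1 : Measure ℂ) (frontier A)).toReal

/-- The law of the `N × N` real Ginibre matrix: i.i.d. standard Gaussian entries,
realized on the canonical product space. -/
def ginibreMeasure (N : ℕ) : Measure ((Fin N × Fin N) → ℝ) :=
  Measure.pi fun _ => gaussianReal 0 1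

/-- The real Ginibre matrix `G_N` as a function of the sample point. -/
def ginibreMatrix (N : ℕ) (ω : (Fin N × Fin N) → ℝ) : Matrix (Fin N) (Fin N) ℝ :=
  Matrix.of fun i j => ω (i, j)

/-- `W_N = N^{-1/2} G_N`. -/
def Wmatrix (N : ℕ) (ω : (Fin N × Fin N) → ℝ) : Matrix (Fin N) (Fin N) ℝ :=
  (Real.sqrt N)⁻¹ • ginibreMatrix N ω

/-- The eigenvalues (with multiplicity) of a real matrix: the multiset of complex
roots of its characteristic polynomial. -/
def eigs {N : ℕ} (M : Matrix (Fin N) (Fin N) ℝ) : Multiset ℂ :=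
  (Matrix.charpoly (M.map fun x => (x : ℂ))).roots

/-- The number of eigenvalues of `M` lying in `A`, with multiplicity. -/
def countIn (A : Set ℂ) {N : ℕ} (M : Matrix (Fin N) (Fin N) ℝ) : ℕ :=
  letI := Classical.decPred fun z : ℂ => z ∈ A
  Multiset.countP (fun z => z ∈ A) (eigs M)

/-- The centered eigenvalue counting statistic `X_A` of `W_N`. -/
def XA (A : Set ℂ) (N : ℕ) (ω : (Fin N × Fin N) → ℝ) : ℝ :=
  (countIn A (Wmatrix N ω) : ℝ) -
    ∫ ω', (countIn A (Wmatrix N ω') : ℝ) ∂(ginibreMeasure N)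

/-- `s_N(z) = e^{-z} ∑_{j<N} z^j/j!`. -/
def sN (N : ℕ) (z : ℂ) : ℂ :=
  Complex.exp (-z) * ∑ j ∈ Finset.range N, z ^ j / (Nat.factorial j : ℂ)

/-- The complementary error function. -/
def erfc (x : ℝ) : ℝ := (2 / Real.sqrt Real.pi) * ∫ t in Set.Ioi x, Real.exp (-t ^ 2)

/-- `G(z,w) = √(erfc(√2 Im z) erfc(√2 Im w))`. -/
def Gker (z w : ℂ) : ℝ :=
  Real.sqrt (erfc (Real.sqrt 2 * z.im) * erfc (Real.sqrt 2 * w.im))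

/-- The kernel `S_N`. -/
def SN (N : ℕ) (z w : ℂ) : ℂ :=
  Complex.I * Complex.exp (-(1 / 2 : ℂ) * (z - conj w) ^ 2) / (Real.sqrt (2 * Real.pi) : ℂ) *
    (conj w - z) * (Gker z w : ℂ) * sN N (z * conj w)

/-- The kernel `D_N`. -/
def DN (N : ℕ) (z w : ℂ) : ℂ :=
  Complex.exp (-(1 / 2 : ℂ) * (z - w) ^ 2) / (Real.sqrt (2 * Real.pi) : ℂ) *
    (w - z) * (Gker z w : ℂ) * sN N (z * w)

/-- The kernel `I_N`. -/
def IN (N : ℕ) (z w : ℂ) : ℂ :=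
  Complex.exp (-(1 / 2 : ℂ) * (conj z - conj w) ^ 2) / (Real.sqrt (2 * Real.pi) : ℂ) *
    (conj z - conj w) * (Gker z w : ℂ) * sN N (conj z * conj w)

/-- The Pfaffian of a `2n × 2n` complex matrix, via the sum over permutations. -/
def Pf {n : ℕ} (M : Matrix (Fin (2 * n)) (Fin (2 * n)) ℂ) : ℂ :=
  (1 / (2 ^ n * (Nat.factorial n : ℂ))) *
    ∑ σ : Equiv.Perm (Fin (2 * n)),
      ((Equiv.Perm.sign σ : ℤ) : ℂ) *
        ∏ i : Fin n,
          M (σ ⟨2 * i.val, by have := i.isLt; omega⟩)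
            (σ ⟨2 * i.val + 1, by have := i.isLt; omega⟩)

/-- The `2 × 2` matrix kernel `K(z,w)`. -/
def Kmat (N : ℕ) (z w : ℂ) : Matrix (Fin 2) (Fin 2) ℂ :=
  !![DN N z w, SN N z w; -(SN N w z), IN N z w]

/-- The `2k × 2k` matrix assembled from the `2 × 2` blocks `K(z_i, z_j)`. -/
def blockK (N k : ℕ) (z : Fin k → ℂ) : Matrix (Fin (2 * k)) (Fin (2 * k)) ℂ :=
  Matrix.of fun p q =>
    Kmat N (z ⟨p.val / 2, by have := p.isLt; omega⟩) (z ⟨q.val / 2, by have := q.isLt; omega⟩)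
      ⟨p.val % 2, Nat.mod_lt _ (by omega)⟩ ⟨q.val % 2, Nat.mod_lt _ (by omega)⟩

/-- Cyclic successor on `Fin k` (so that `z_{k+1} = z_1`). -/
def cnext {k : ℕ} (i : Fin k) : Fin k := ⟨(i.val + 1) % k, Nat.mod_lt _ i.pos⟩

/-- `g(z,w) = Re(z) Im(w) - Re(w) Im(z)`. -/
def gfun (z w : ℂ) : ℝ := z.re * w.im - w.re * z.im

/-- The cyclic exponent `-(N/2) ∑ |z_i - z_{i+1}|² + iN ∑ g(z_i, z_{i+1})`. -/
def cycExp (N k : ℕ) (z : Fin k → ℂ) : ℂ :=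
  (Complex.ofReal (-((N : ℝ) / 2) * ∑ i : Fin k, ‖z i - z (cnext i)‖ ^ 2)) +
    Complex.I * (N : ℂ) * Complex.ofReal (∑ i : Fin k, gfun (z i) (z (cnext i)))

/-- `R_k = N^k ∫_{A^k} ∏_{i=1}^k S_N(√N z_i, √N z_{i+1}) dz`, with `z_{k+1} = z_1`. -/
def Rk (N k : ℕ) (A : Set ℂ) : ℂ :=
  (N : ℂ) ^ k *
    ∫ z : Fin k → ℂ in Set.univ.pi fun _ => A,
      ∏ i : Fin k, SN N ((Real.sqrt N : ℂ) * z i) ((Real.sqrt N : ℂ) * z (cnext i))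
      ∂(Measure.pi fun _ => volume)

/-- The sum of `f` over `k`-tuples of pairwise distinct indices of a multiset. -/
def tupleSum (k : ℕ) (s : Multiset ℂ) (f : (Fin k → ℂ) → ℝ) : ℝ :=
  ∑ t : Fin k ↪ Fin s.toList.length, f fun i => s.toList.get (t i)

section AuxProof

lemma aux_isOpen_uhd : IsOpen upperHalfDisk := by
  have h : upperHalfDisk = {z : ℂ | ‖z‖ < 1} ∩ {z : ℂ | 0 < z.im} := rfl
  rw [h]
  exact (isOpen_lt continuous_norm continuous_const).inter
    (isOpen_lt continuous_const Complex.continuous_im)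

lemma aux_real_mem_frontier {z : ℂ} (hz : z ∈ upperHalfDisk) :
    (z.re : ℂ) ∈ frontier upperHalfDisk := by
  obtain ⟨h1, h2⟩ := hz
  rw [aux_isOpen_uhd.frontier_eq]
  constructor
  · have htend : Filter.Tendsto (fun t : ℝ => (z.re : ℂ) + (t : ℂ) * Complex.I)
        (nhdsWithin 0 (Set.Ioi 0)) (nhds (z.re : ℂ)) := by
      have h0 : Filter.Tendsto (fun t : ℝ => (z.re : ℂ) + (t : ℂ) * Complex.I)
          (nhds 0) (nhds ((z.re : ℂ) + ((0:ℝ) : ℂ) * Complex.I)) :=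
        tendsto_const_nhds.add ((Complex.continuous_ofReal.tendsto 0).mul tendsto_const_nhds)
      simpa using h0.mono_left nhdsWithin_le_nhds
    refine mem_closure_of_tendsto htend ?_
    filter_upwards [Ioo_mem_nhdsGT_of_mem (⟨le_refl (0:ℝ), h2⟩ : (0:ℝ) ∈ Set.Ico 0 z.im)]
    rintro t ⟨ht0, hty⟩
    have hre : ((z.re : ℂ) + (t : ℂ) * Complex.I).re = z.re := by simp
    have him : ((z.re : ℂ) + (t : ℂ) * Complex.I).im = t := by simp
    refine ⟨?_, ?_⟩
    · rw [Complex.norm_def, Complex.normSq_apply, hre, him]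
      rw [Complex.norm_def, Complex.normSq_apply] at h1
      have hle : z.re * z.re + t * t ≤ z.re * z.re + z.im * z.im := by nlinarith
      exact lt_of_le_of_lt (Real.sqrt_le_sqrt hle) h1
    · rw [him]; exact ht0
  · intro hc
    exact lt_irrefl 0 (by simpa using hc.2)

lemma aux_circle_mem_frontier {z : ℂ} (hz : z ∈ upperHalfDisk) :
    z / (‖z‖ : ℂ) ∈ frontier upperHalfDisk := by
  obtain ⟨h1, h2⟩ := hz
  have hz0 : z ≠ 0 := by
    intro h; rw [h] at h2; simp at h2
  have ha : 0 < ‖z‖ := norm_pos_iff.mpr hz0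
  rw [aux_isOpen_uhd.frontier_eq]
  constructor
  · have htend : Filter.Tendsto (fun t : ℝ => (t : ℂ) * (z / (‖z‖ : ℂ)))
        (nhdsWithin 1 (Set.Iio 1)) (nhds (z / (‖z‖ : ℂ))) := by
      have h0 : Filter.Tendsto (fun t : ℝ => (t : ℂ) * (z / (‖z‖ : ℂ)))
          (nhds 1) (nhds (((1:ℝ) : ℂ) * (z / (‖z‖ : ℂ)))) :=
        (Complex.continuous_ofReal.tendsto 1).mul tendsto_const_nhds
      simpa using h0.mono_left nhdsWithin_le_nhds
    refine mem_closure_of_tendsto htend ?_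
    filter_upwards [Ioo_mem_nhdsLT_of_mem (⟨zero_lt_one, le_refl (1:ℝ)⟩ : (1:ℝ) ∈ Set.Ioc 0 1)]
    rintro t ⟨ht0, ht1⟩
    refine ⟨?_, ?_⟩
    · rw [norm_mul, norm_div, Complex.norm_real, Real.norm_eq_abs, Complex.norm_real, Real.norm_eq_abs,
        abs_of_pos ht0, abs_of_pos ha, div_self (ne_of_gt ha), mul_one]
      exact ht1
    · have him : ((t:ℂ) * (z / (‖z‖ : ℂ))).im = t * (z.im / ‖z‖) := by
        simp [Complex.mul_im, Complex.div_ofReal_im]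
      rw [him]
      exact mul_pos ht0 (div_pos h2 ha)
  · intro hc
    have hcc := hc.1
    rw [norm_div, Complex.norm_real, Real.norm_eq_abs, abs_of_pos ha, div_self (ne_of_gt ha)] at hcc
    exact lt_irrefl 1 hcc

lemma aux_dist_re {z : ℂ} (him : 0 ≤ z.im) : dist z (z.re : ℂ) = z.im := by
  rw [Complex.dist_eq]
  have h : z - (z.re : ℂ) = (z.im : ℂ) * Complex.I := by
    apply Complex.ext <;> simp
  rw [h, norm_mul, Complex.norm_real, Real.norm_eq_abs, Complex.norm_I, mul_one, abs_of_nonneg him]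

lemma aux_dist_circle {z : ℂ} (hz0 : z ≠ 0) (hz1 : ‖z‖ ≤ 1) :
    dist z (z / (‖z‖ : ℂ)) = 1 - ‖z‖ := by
  have ha : 0 < ‖z‖ := norm_pos_iff.mpr hz0
  rw [Complex.dist_eq]
  have h : z - z / (‖z‖ : ℂ) = z * ((1 - (‖z‖)⁻¹ : ℝ) : ℂ) := by
    rw [div_eq_mul_inv]; push_cast; ring
  rw [h, norm_mul, Complex.norm_real, Real.norm_eq_abs]
  have hinv : (1:ℝ) ≤ (‖z‖)⁻¹ := by simpa using inv_anti₀ ha hz1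
  rw [abs_of_nonpos (by linarith)]
  have : ‖z‖ * (‖z‖)⁻¹ = 1 := mul_inv_cancel₀ (ne_of_gt ha)
  nlinarith [this]

lemma aux_dA (A : Set ℂ) (hdom : IsPlaneDomain A) (hadm : IsAdmissible A) :
    0 < dA A ∧ dA A < 1 ∧ ∀ z ∈ A, dA A ≤ z.im ∧ ‖z‖ ≤ 1 - dA A := by
  obtain ⟨z₀, hz₀⟩ := hdom.2.nonempty
  have hsub : A ⊆ upperHalfDisk := fun z hz => hadm (subset_closure hz)
  set S := {r : ℝ | ∃ z ∈ A, ∃ w ∈ frontier upperHalfDisk, r = dist z w} with hS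
  have hbdd : BddBelow S := by
    refine ⟨0, ?_⟩
    rintro r ⟨z, _, w, _, rfl⟩
    exact dist_nonneg
  have hne0 : ∀ z ∈ A, z ≠ 0 := by
    intro z hz h0
    have := (hsub hz).2
    rw [h0] at this; simp at this
  have hmemim : ∀ z ∈ A, z.im ∈ S := by
    intro z hz
    exact ⟨z, hz, _, aux_real_mem_frontier (hsub hz), (aux_dist_re (le_of_lt (hsub hz).2)).symm⟩
  have hmemabs : ∀ z ∈ A, 1 - ‖z‖ ∈ S := by
    intro z hz
    exact ⟨z, hz, _, aux_circle_mem_frontier (hsub hz),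
      (aux_dist_circle (hne0 z hz) (le_of_lt (hsub hz).1)).symm⟩
  have hne : S.Nonempty := ⟨_, hmemim z₀ hz₀⟩
  have hKb : Bornology.IsBounded (closure A) := by
    apply Metric.isBounded_closedBall (x := (0:ℂ)) (r := 1) |>.subset
    intro z hzc
    have := (hadm hzc).1
    simp only [Metric.mem_closedBall, Complex.dist_eq, sub_zero]
    exact le_of_lt this
  have hK : IsCompact (closure A) := Metric.isCompact_of_isClosed_isBounded isClosed_closure hKb
  obtain ⟨δ, hδ0, hδ⟩ := hK.exists_thickening_subset_open aux_isOpen_uhd hadm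
  have hpos : ∀ r ∈ S, δ ≤ r := by
    rintro r ⟨z, hzA, w, hwF, rfl⟩
    by_contra hlt
    push_neg at hlt
    have hw : w ∈ Metric.thickening δ (closure A) := by
      rw [Metric.mem_thickening_iff]
      exact ⟨z, subset_closure hzA, by rwa [dist_comm]⟩
    have hwU : w ∈ upperHalfDisk := hδ hw
    rw [aux_isOpen_uhd.frontier_eq] at hwF
    exact hwF.2 hwU
  have hd0 : 0 < dA A := lt_of_lt_of_le hδ0 (le_csInf hne hpos)
  have him : ∀ z ∈ A, dA A ≤ z.im := fun z hz => csInf_le hbdd (hmemim z hz)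
  have habs : ∀ z ∈ A, dA A ≤ 1 - ‖z‖ := fun z hz => csInf_le hbdd (hmemabs z hz)
  have hd1 : dA A < 1 := by
    have h1 := him z₀ hz₀
    have h2 : z₀.im ≤ ‖z₀‖ := le_trans (le_abs_self _) (Complex.abs_im_le_norm z₀)
    have h3 := (hsub hz₀).1
    linarith
  exact ⟨hd0, hd1, fun z hz => ⟨him z hz, by linarith [habs z hz]⟩⟩

lemma aux_erfc_nonneg (x : ℝ) : 0 ≤ erfc x := by
  unfold erfc
  apply mul_nonneg (by positivity)
  apply MeasureTheory.setIntegral_nonneg measurableSet_Ioi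
  intro t _
  positivity

lemma aux_gaussian_integrableOn (y : ℝ) :
    MeasureTheory.IntegrableOn (fun t : ℝ => Real.exp (-t ^ 2)) (Set.Ioi y) := by
  have h := integrable_exp_neg_mul_sq (b := 1) one_pos
  simpa using h.integrableOn

lemma aux_erfc_le {x : ℝ} (hx : 0 ≤ x) : erfc x ≤ Real.exp (-x ^ 2) := by
  have hshift : (∫ t in Set.Ioi x, Real.exp (-(t - x) ^ 2))
      = ∫ s in Set.Ioi (0:ℝ), Real.exp (-s ^ 2) := by
    have hind : ∀ t : ℝ, (Set.Ioi x).indicator (fun t => Real.exp (-(t - x) ^ 2)) t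
        = (Set.Ioi (0:ℝ)).indicator (fun s => Real.exp (-s ^ 2)) (t - x) := by
      intro t
      by_cases h : t ∈ Set.Ioi x
      · rw [Set.indicator_of_mem h, Set.indicator_of_mem]
        simp only [Set.mem_Ioi] at h ⊢; linarith
      · rw [Set.indicator_of_notMem h, Set.indicator_of_notMem]
        simp only [Set.mem_Ioi] at h ⊢; linarith
    rw [← MeasureTheory.integral_indicator measurableSet_Ioi,
      ← MeasureTheory.integral_indicator measurableSet_Ioi]
    simp_rw [hind]
    exact MeasureTheory.integral_sub_right_eq_self
      (fun s => (Set.Ioi (0:ℝ)).indicator (fun u => Real.exp (-u ^ 2)) s) x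
  have hint2 : MeasureTheory.IntegrableOn
      (fun t : ℝ => Real.exp (-x ^ 2) * Real.exp (-(t - x) ^ 2)) (Set.Ioi x) := by
    apply MeasureTheory.Integrable.integrableOn
    apply MeasureTheory.Integrable.const_mul
    have h := (integrable_exp_neg_mul_sq (b := 1) one_pos).comp_sub_right x
    simpa using h
  have hmono : (∫ t in Set.Ioi x, Real.exp (-t ^ 2))
      ≤ ∫ t in Set.Ioi x, Real.exp (-x ^ 2) * Real.exp (-(t - x) ^ 2) := by
    apply MeasureTheory.setIntegral_mono_on (aux_gaussian_integrableOn x) hint2 measurableSet_Ioi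
    intro t ht
    simp only [Set.mem_Ioi] at ht
    rw [← Real.exp_add]
    apply Real.exp_le_exp.2
    nlinarith
  have hgauss : (∫ s in Set.Ioi (0:ℝ), Real.exp (-s ^ 2)) = Real.sqrt Real.pi / 2 := by
    have h := integral_gaussian_Ioi 1
    simpa using h
  have hπ : 0 < Real.sqrt Real.pi := Real.sqrt_pos.2 Real.pi_pos
  unfold erfc
  calc (2 / Real.sqrt Real.pi) * ∫ t in Set.Ioi x, Real.exp (-t ^ 2)
      ≤ (2 / Real.sqrt Real.pi) * (Real.exp (-x ^ 2) * (Real.sqrt Real.pi / 2)) := by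
        apply mul_le_mul_of_nonneg_left _ (by positivity)
        calc (∫ t in Set.Ioi x, Real.exp (-t ^ 2))
            ≤ ∫ t in Set.Ioi x, Real.exp (-x ^ 2) * Real.exp (-(t - x) ^ 2) := hmono
          _ = Real.exp (-x ^ 2) * ∫ t in Set.Ioi x, Real.exp (-(t - x) ^ 2) :=
              MeasureTheory.integral_const_mul _ _
          _ = Real.exp (-x ^ 2) * (Real.sqrt Real.pi / 2) := by rw [hshift, hgauss]
    _ = Real.exp (-x ^ 2) := by field_simp

lemma aux_Gker_le {z w : ℂ} (hz : 0 ≤ z.im) (hw : 0 ≤ w.im) :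
    Gker z w ≤ Real.exp (-(z.im ^ 2 + w.im ^ 2)) := by
  unfold Gker
  have h1 : erfc (Real.sqrt 2 * z.im) ≤ Real.exp (-(Real.sqrt 2 * z.im) ^ 2) :=
    aux_erfc_le (by positivity)
  have h2 : erfc (Real.sqrt 2 * w.im) ≤ Real.exp (-(Real.sqrt 2 * w.im) ^ 2) :=
    aux_erfc_le (by positivity)
  have hsq : ∀ y : ℝ, (Real.sqrt 2 * y) ^ 2 = 2 * y ^ 2 := by
    intro y; rw [mul_pow, Real.sq_sqrt (by norm_num : (0:ℝ) ≤ 2)]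
  calc Real.sqrt (erfc (Real.sqrt 2 * z.im) * erfc (Real.sqrt 2 * w.im))
      ≤ Real.sqrt (Real.exp (-(Real.sqrt 2 * z.im) ^ 2) * Real.exp (-(Real.sqrt 2 * w.im) ^ 2)) := by
        apply Real.sqrt_le_sqrt
        exact mul_le_mul h1 h2 (aux_erfc_nonneg _) (Real.exp_nonneg _)
    _ = Real.exp (-(z.im ^ 2 + w.im ^ 2)) := by
        rw [← Real.exp_add, hsq, hsq,
          show -(2 * z.im ^ 2) + -(2 * w.im ^ 2)
            = -(z.im ^ 2 + w.im ^ 2) + -(z.im ^ 2 + w.im ^ 2) by ring,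
          Real.exp_add, Real.sqrt_mul_self (Real.exp_nonneg _)]

lemma aux_pow_div_factorial_le (N : ℕ) : (N:ℝ) ^ N / N.factorial ≤ Real.exp N := by
  have h1 : (N:ℝ) ^ N / N.factorial ≤ ∑ i ∈ Finset.range (N+1), (N:ℝ) ^ i / i.factorial :=
    Finset.single_le_sum (f := fun i => (N:ℝ) ^ i / (i.factorial : ℝ))
      (fun i _ => by positivity) (Finset.self_mem_range_succ N)
  exact h1.trans (Real.sum_le_exp_of_nonneg (Nat.cast_nonneg N) (N+1))

lemma aux_gmono {a r : ℝ} (ha : 0 < a) (har : a ≤ r) (hr1 : r ≤ 1) :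
    Real.log a - a ^ 2 / 2 ≤ Real.log r - r ^ 2 / 2 := by
  have hr0 : 0 < r := lt_of_lt_of_le ha har
  have h2 : Real.log (a / r) ≤ a / r - 1 := Real.log_le_sub_one_of_pos (by positivity)
  have h4 : a - r ≤ (a ^ 2 - r ^ 2) / 2 * r := by
    nlinarith [mul_nonneg (sub_nonneg.2 har) (sub_nonneg.2 (show r * (a + r) ≤ 2 by nlinarith))]
  have h3 : a / r - 1 ≤ (a ^ 2 - r ^ 2) / 2 := by
    rw [div_sub_one (ne_of_gt hr0), div_le_iff₀ hr0]
    exact h4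
  have h5 : Real.log (a / r) = Real.log a - Real.log r := Real.log_div (ne_of_gt ha) (ne_of_gt hr0)
  linarith

lemma aux_sN_bound {N : ℕ} {v : ℂ} {ρ : ℝ} (hρ0 : 0 ≤ ρ) (hρ1 : ρ < 1)
    (hv : ‖v‖ ≤ N * ρ) :
    ‖sN N v‖ ≤ 1 + Real.exp (-v.re) * (‖v‖ ^ N / N.factorial) * (1 - ρ)⁻¹ := by
  have habs : ∀ n : ℕ, ‖v ^ n / (n.factorial : ℂ)‖ = ‖v‖ ^ n / n.factorial := by
    intro n
    rw [norm_div, norm_pow, Complex.norm_natCast]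
  have hsum0 : Summable (fun n : ℕ => ‖v‖ ^ n / (n.factorial : ℝ)) :=
    Real.summable_pow_div_factorial _
  have hsum : Summable (fun n : ℕ => v ^ n / (n.factorial : ℂ)) := by
    apply Summable.of_norm
    simpa only [habs] using hsum0
  have hexp : Complex.exp v = ∑' n : ℕ, v ^ n / (n.factorial : ℂ) := by
    rw [Complex.exp_eq_exp_ℂ, NormedSpace.exp_eq_tsum_div]
  have hsplit : ∑ j ∈ Finset.range N, v ^ j / (j.factorial : ℂ)
      = Complex.exp v - ∑' j : ℕ, v ^ (j + N) / ((j + N).factorial : ℂ) := by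
    rw [hexp]
    exact eq_sub_of_add_eq (Summable.sum_add_tsum_nat_add N hsum)
  have hterm : ∀ j : ℕ, ‖v‖ ^ (j + N) / ((j + N).factorial : ℝ)
      ≤ ‖v‖ ^ N / N.factorial * ρ ^ j := by
    intro j
    induction j with
    | zero => simp
    | succ j ih =>
      have hfac : ((j + 1 + N).factorial : ℝ) = ((j + N : ℕ) + 1) * ((j + N).factorial : ℝ) := by
        rw [show j + 1 + N = (j + N) + 1 by omega, Nat.factorial_succ]
        push_cast
        ring
      have hstep : ‖v‖ ^ (j + 1 + N) / ((j + 1 + N).factorial : ℝ)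
          = (‖v‖ ^ (j + N) / ((j + N).factorial : ℝ))
              * (‖v‖ / ((j + N : ℕ) + 1)) := by
        rw [show j + 1 + N = (j + N) + 1 by omega] at hfac ⊢
        rw [pow_succ, hfac, div_mul_div_comm]
        ring
      rw [hstep]
      have hratio : ‖v‖ / ((j + N : ℕ) + 1) ≤ ρ := by
        rw [div_le_iff₀ (by positivity)]
        have hcast : (N:ℝ) ≤ ((j + N : ℕ) : ℝ) + 1 := by
          push_cast
          linarith [Nat.cast_nonneg (α := ℝ) j]
        calc ‖v‖ ≤ N * ρ := hv
          _ ≤ (((j + N : ℕ) : ℝ) + 1) * ρ := mul_le_mul_of_nonneg_right hcast hρ0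
          _ = ρ * (((j + N : ℕ) : ℝ) + 1) := by ring
      calc ‖v‖ ^ (j + N) / ((j + N).factorial : ℝ) * (‖v‖ / ((j + N : ℕ) + 1))
          ≤ ‖v‖ ^ N / N.factorial * ρ ^ j * ρ := by
            apply mul_le_mul ih hratio (by positivity) (by positivity)
        _ = ‖v‖ ^ N / N.factorial * ρ ^ (j + 1) := by ring
  have hsumtail : Summable (fun j : ℕ => ‖v‖ ^ (j + N) / ((j + N).factorial : ℝ)) :=
    (summable_nat_add_iff N).2 hsum0
  have hgeo : Summable (fun j : ℕ => ‖v‖ ^ N / N.factorial * ρ ^ j) :=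
    (summable_geometric_of_lt_one hρ0 hρ1).mul_left _
  have htail : ‖∑' j : ℕ, v ^ (j + N) / ((j + N).factorial : ℂ)‖
      ≤ ‖v‖ ^ N / N.factorial * (1 - ρ)⁻¹ := by
    skip
    calc ‖∑' j : ℕ, v ^ (j + N) / ((j + N).factorial : ℂ)‖
        ≤ ∑' j : ℕ, ‖v ^ (j + N) / ((j + N).factorial : ℂ)‖ := by
          apply norm_tsum_le_tsum_norm
          simpa only [habs] using hsumtail
      _ = ∑' j : ℕ, ‖v‖ ^ (j + N) / ((j + N).factorial : ℝ) := by
          apply tsum_congr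
          intro j
          exact habs _
      _ ≤ ∑' j : ℕ, ‖v‖ ^ N / N.factorial * ρ ^ j :=
          Summable.tsum_le_tsum hterm hsumtail hgeo
      _ = ‖v‖ ^ N / N.factorial * ∑' j : ℕ, ρ ^ j := tsum_mul_left
      _ = ‖v‖ ^ N / N.factorial * (1 - ρ)⁻¹ := by
          rw [tsum_geometric_of_lt_one hρ0 hρ1]
  have hS : ‖∑ j ∈ Finset.range N, v ^ j / (j.factorial : ℂ)‖
      ≤ Real.exp v.re + ‖v‖ ^ N / N.factorial * (1 - ρ)⁻¹ := by
    rw [hsplit]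
    calc ‖Complex.exp v - ∑' j : ℕ, v ^ (j + N) / ((j + N).factorial : ℂ)‖
        ≤ ‖Complex.exp v‖ + ‖∑' j : ℕ, v ^ (j + N) / ((j + N).factorial : ℂ)‖ := norm_sub_le _ _
      _ ≤ Real.exp v.re + ‖v‖ ^ N / N.factorial * (1 - ρ)⁻¹ := by
          apply add_le_add
          · rw [Complex.norm_exp]
          · skip
            exact htail
  unfold sN
  rw [norm_mul, Complex.norm_exp]
  have hre : (-v).re = -v.re := by simp
  rw [hre]
  calc Real.exp (-v.re) * ‖∑ j ∈ Finset.range N, v ^ j / (j.factorial : ℂ)‖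
      ≤ Real.exp (-v.re) * (Real.exp v.re + ‖v‖ ^ N / N.factorial * (1 - ρ)⁻¹) :=
        mul_le_mul_of_nonneg_left hS (Real.exp_nonneg _)
    _ = 1 + Real.exp (-v.re) * (‖v‖ ^ N / N.factorial) * (1 - ρ)⁻¹ := by
        rw [mul_add, ← Real.exp_add, neg_add_cancel, Real.exp_zero]
        ring


lemma aux_quad1 {d x y1 y2 : ℝ} (hd0 : 0 < d) (h1 : d ≤ y1) (h2 : d ≤ y2) :
    -(1/2:ℝ) * (x ^ 2 - (y1 - y2) ^ 2) - (y1 ^ 2 + y2 ^ 2) ≤ -2 * d ^ 2 := by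
  nlinarith [sq_nonneg x, mul_nonneg (show (0:ℝ) ≤ y1 + y2 - 2 * d by linarith)
    (show (0:ℝ) ≤ y1 + y2 + 2 * d by linarith)]

lemma aux_core {d a b : ℝ} (ha0 : 0 < a) (hb0 : 0 < b) (hd0 : 0 < d) (hd1 : d < 1)
    (ha : a ≤ 1 - d) (hb : b ≤ 1 - d) :
    1 + Real.log a + Real.log b - (a ^ 2 + b ^ 2) / 2 ≤ -(d ^ 2) := by
  have hgm_a := aux_gmono ha0 ha (by linarith)
  have hgm_b := aux_gmono hb0 hb (by linarith)
  have hlogr : Real.log (1 - d) ≤ -d := by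
    have := Real.log_le_sub_one_of_pos (show (0:ℝ) < 1 - d by linarith)
    linarith
  nlinarith [hgm_a, hgm_b, hlogr]

lemma aux_quad2 {d x1 x2 y1 y2 a b : ℝ} (ha2 : x1 ^ 2 + y1 ^ 2 = a ^ 2)
    (hb2 : x2 ^ 2 + y2 ^ 2 = b ^ 2)
    (hcore : 1 + Real.log a + Real.log b - (a ^ 2 + b ^ 2) / 2 ≤ -(d ^ 2)) :
    -(1/2:ℝ) * ((x1 - x2) ^ 2 - (y1 - y2) ^ 2) - (y1 ^ 2 + y2 ^ 2) - (x1 * x2 - y1 * y2)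
      + 1 + Real.log a + Real.log b ≤ -(d ^ 2) := by
  have hiden : -(1/2:ℝ) * ((x1 - x2) ^ 2 - (y1 - y2) ^ 2) - (y1 ^ 2 + y2 ^ 2)
      - (x1 * x2 - y1 * y2) = -(a ^ 2 + b ^ 2) / 2 := by
    linear_combination (-(1/2:ℝ)) * ha2 + (-(1/2:ℝ)) * hb2
  linarith

lemma aux_ineq1 {d : ℝ} (hd0 : 0 < d) (hd1 : d < 1) : (1 - d) ^ 2 < 1 := by nlinarith

lemma aux_ineq2 {d : ℝ} (hd0 : 0 < d) (hd1 : d < 1) : d ≤ 1 - (1 - d) ^ 2 := by nlinarith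

lemma aux_sqrt_le_self {x : ℝ} (hx : 1 ≤ x) : Real.sqrt x ≤ x := by
  have h := Real.sqrt_le_sqrt (show x ≤ x ^ 2 by nlinarith)
  rwa [Real.sqrt_sq (by linarith)] at h

set_option maxHeartbeats 1000000 in
lemma aux_master {d : ℝ} (hd0 : 0 < d) (hd1 : d < 1) {z w : ℂ}
    (hz1 : d ≤ z.im) (hw1 : d ≤ w.im)
    (hz2 : ‖z‖ ≤ 1 - d) (hw2 : ‖w‖ ≤ 1 - d)
    {N : ℕ} (hN : 1 ≤ N) {v : ℂ} (hv1 : ‖v‖ = N * ‖z * w‖)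
    (hv2 : v.re = N * (z * w).re) :
    Real.exp (-((N:ℝ) / 2) * ((z - w) ^ 2).re) * (Real.sqrt N * ‖w - z‖) *
        Gker ((Real.sqrt N : ℂ) * z) ((Real.sqrt N : ℂ) * w) * ‖sN N v‖ ≤
      8 / d ^ 3 * Real.exp (-(d ^ 2 / 2) * N) := by
  have hNr : (1:ℝ) ≤ (N:ℝ) := by exact_mod_cast hN
  have hN0 : (0:ℝ) < N := by linarith
  have ha0 : 0 < ‖z‖ :=
    lt_of_lt_of_le hd0 (le_trans hz1 (le_trans (le_abs_self _) (Complex.abs_im_le_norm z)))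
  have hb0 : 0 < ‖w‖ :=
    lt_of_lt_of_le hd0 (le_trans hw1 (le_trans (le_abs_self _) (Complex.abs_im_le_norm w)))
  have hy10 : 0 < z.im := lt_of_lt_of_le hd0 hz1
  have hy20 : 0 < w.im := lt_of_lt_of_le hd0 hw1
  have hr1 : (0:ℝ) < 1 - d := by linarith
  -- the Gker bound
  have him1 : ((Real.sqrt N : ℂ) * z).im = Real.sqrt N * z.im := by
    simp [Complex.mul_im]
  have him2 : ((Real.sqrt N : ℂ) * w).im = Real.sqrt N * w.im := by
    simp [Complex.mul_im]
  have hG : Gker ((Real.sqrt N : ℂ) * z) ((Real.sqrt N : ℂ) * w)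
      ≤ Real.exp (-((N:ℝ) * (z.im ^ 2 + w.im ^ 2))) := by
    have h := aux_Gker_le (z := (Real.sqrt N : ℂ) * z) (w := (Real.sqrt N : ℂ) * w)
      (by rw [him1]; positivity) (by rw [him2]; positivity)
    rw [him1, him2] at h
    have heq : -((Real.sqrt N * z.im) ^ 2 + (Real.sqrt N * w.im) ^ 2)
        = -((N:ℝ) * (z.im ^ 2 + w.im ^ 2)) := by
      rw [mul_pow, mul_pow, Real.sq_sqrt (Nat.cast_nonneg N)]
      ring
    rwa [heq] at h
  -- the sN bound
  set ρ : ℝ := (1 - d) ^ 2 with hρdef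
  have hρ0 : 0 ≤ ρ := sq_nonneg _
  have hρ1 : ρ < 1 := aux_ineq1 hd0 hd1
  have hvabs : ‖v‖ = N * (‖z‖ * ‖w‖) := by
    rw [hv1, norm_mul]
  have hsN : ‖sN N v‖
      ≤ 1 + Real.exp (-v.re) * (‖v‖ ^ N / N.factorial) * (1 - ρ)⁻¹ := by
    apply aux_sN_bound hρ0 hρ1
    rw [hvabs]
    apply mul_le_mul_of_nonneg_left _ hN0.le
    calc ‖z‖ * ‖w‖
        ≤ (1 - d) * (1 - d) := mul_le_mul hz2 hw2 (norm_nonneg _) (by linarith)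
      _ = ρ := by rw [hρdef]; ring
  -- real and imaginary part identities
  have hRe : ((z - w) ^ 2).re = (z.re - w.re) ^ 2 - (z.im - w.im) ^ 2 := by
    rw [pow_two, Complex.mul_re, Complex.sub_re, Complex.sub_im]
    ring
  have hzw : (z * w).re = z.re * w.re - z.im * w.im := by
    simp [Complex.mul_re]
  have ha2 : z.re ^ 2 + z.im ^ 2 = ‖z‖ ^ 2 := by
    rw [Complex.sq_norm, Complex.normSq_apply]
    ring
  have hb2 : w.re ^ 2 + w.im ^ 2 = ‖w‖ ^ 2 := by
    rw [Complex.sq_norm, Complex.normSq_apply]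
    ring
  -- first exponent bound
  have hbase1 : -(1/2:ℝ) * ((z.re - w.re) ^ 2 - (z.im - w.im) ^ 2) - (z.im ^ 2 + w.im ^ 2)
      ≤ -2 * d ^ 2 := aux_quad1 hd0 hz1 hw1
  have hE1 : -((N:ℝ)/2) * ((z - w) ^ 2).re + -((N:ℝ) * (z.im ^ 2 + w.im ^ 2))
      ≤ -(d ^ 2) * N := by
    rw [hRe]
    calc -((N:ℝ)/2) * ((z.re - w.re) ^ 2 - (z.im - w.im) ^ 2)
          + -((N:ℝ) * (z.im ^ 2 + w.im ^ 2))
        = (N:ℝ) * (-(1/2:ℝ) * ((z.re - w.re) ^ 2 - (z.im - w.im) ^ 2)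
            - (z.im ^ 2 + w.im ^ 2)) := by ring
      _ ≤ (N:ℝ) * (-2 * d ^ 2) := mul_le_mul_of_nonneg_left hbase1 hN0.le
      _ ≤ -(d ^ 2) * N := by
          have hdd := mul_nonneg hN0.le (sq_nonneg d)
          linarith
  -- second exponent bound
  have hE2core : 1 + Real.log (‖z‖) + Real.log (‖w‖)
      - (‖z‖ ^ 2 + ‖w‖ ^ 2) / 2 ≤ -(d ^ 2) :=
    aux_core ha0 hb0 hd0 hd1 hz2 hw2
  have hpu : -(1/2:ℝ) * ((z.re - w.re) ^ 2 - (z.im - w.im) ^ 2) - (z.im ^ 2 + w.im ^ 2)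
      - (z.re * w.re - z.im * w.im) + 1 + Real.log (‖z‖) + Real.log (‖w‖)
      ≤ -(d ^ 2) := aux_quad2 ha2 hb2 hE2core
  have hE2 : -((N:ℝ)/2) * ((z - w) ^ 2).re + -((N:ℝ) * (z.im ^ 2 + w.im ^ 2)) + -v.re
      + (N:ℝ) + (N:ℝ) * Real.log (‖z‖) + (N:ℝ) * Real.log (‖w‖)
      ≤ -(d ^ 2) * N := by
    rw [hv2, hRe, hzw]
    calc -((N:ℝ)/2) * ((z.re - w.re) ^ 2 - (z.im - w.im) ^ 2)
          + -((N:ℝ) * (z.im ^ 2 + w.im ^ 2)) + -((N:ℝ) * (z.re * w.re - z.im * w.im))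
          + (N:ℝ) + (N:ℝ) * Real.log (‖z‖) + (N:ℝ) * Real.log (‖w‖)
        = (N:ℝ) * (-(1/2:ℝ) * ((z.re - w.re) ^ 2 - (z.im - w.im) ^ 2) - (z.im ^ 2 + w.im ^ 2)
            - (z.re * w.re - z.im * w.im) + 1 + Real.log (‖z‖)
            + Real.log (‖w‖)) := by ring
      _ ≤ (N:ℝ) * (-(d ^ 2)) := mul_le_mul_of_nonneg_left hpu hN0.le
      _ = -(d ^ 2) * N := by ring
  -- pieces of the product bound
  have hP : Real.sqrt N * ‖w - z‖ ≤ Real.sqrt N * 2 := by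
    apply mul_le_mul_of_nonneg_left _ (Real.sqrt_nonneg _)
    calc ‖w - z‖ ≤ ‖w‖ + ‖z‖ := by
          skip
          exact norm_sub_le _ _
      _ ≤ 2 := by linarith
  -- key products
  have key1 : Real.exp (-((N:ℝ)/2) * ((z - w) ^ 2).re)
      * Real.exp (-((N:ℝ) * (z.im ^ 2 + w.im ^ 2))) ≤ Real.exp (-(d ^ 2) * N) := by
    rw [← Real.exp_add]
    exact Real.exp_le_exp.2 hE1
  have hQbound : Real.exp (-((N:ℝ)/2) * ((z - w) ^ 2).re)
      * Real.exp (-((N:ℝ) * (z.im ^ 2 + w.im ^ 2)))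
      * (Real.exp (-v.re) * (‖v‖ ^ N / N.factorial) * (1 - ρ)⁻¹)
      ≤ Real.exp (-(d ^ 2) * N) * d⁻¹ := by
    have hpow : ‖v‖ ^ N / N.factorial
        ≤ Real.exp N * Real.exp ((N:ℝ) * Real.log (‖z‖))
            * Real.exp ((N:ℝ) * Real.log (‖w‖)) := by
      rw [hvabs]
      have hab : ((N:ℝ) * (‖z‖ * ‖w‖)) ^ N
          = (N:ℝ) ^ N * ‖z‖ ^ N * ‖w‖ ^ N := by
        rw [mul_pow, mul_pow]
        ring
      rw [hab]
      have hNN : (N:ℝ) ^ N / N.factorial ≤ Real.exp N := aux_pow_div_factorial_le N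
      have hza : ‖z‖ ^ N = Real.exp ((N:ℝ) * Real.log (‖z‖)) := by
        rw [Real.exp_nat_mul, Real.exp_log ha0]
      have hzb : ‖w‖ ^ N = Real.exp ((N:ℝ) * Real.log (‖w‖)) := by
        rw [Real.exp_nat_mul, Real.exp_log hb0]
      calc (N:ℝ) ^ N * ‖z‖ ^ N * ‖w‖ ^ N / N.factorial
          = ((N:ℝ) ^ N / N.factorial) * (‖z‖ ^ N * ‖w‖ ^ N) := by ring
        _ ≤ Real.exp N * (‖z‖ ^ N * ‖w‖ ^ N) := by
            apply mul_le_mul_of_nonneg_right hNN (by positivity)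
        _ = Real.exp N * Real.exp ((N:ℝ) * Real.log (‖z‖))
            * Real.exp ((N:ℝ) * Real.log (‖w‖)) := by
            rw [hza, hzb]; ring
    have hinv : (1 - ρ)⁻¹ ≤ d⁻¹ := by
      apply inv_anti₀ hd0
      exact aux_ineq2 hd0 hd1
    have hnn : (0:ℝ) ≤ Real.exp (-((N:ℝ)/2) * ((z - w) ^ 2).re)
        * Real.exp (-((N:ℝ) * (z.im ^ 2 + w.im ^ 2))) * Real.exp (-v.re) := by positivity
    calc Real.exp (-((N:ℝ)/2) * ((z - w) ^ 2).re)
          * Real.exp (-((N:ℝ) * (z.im ^ 2 + w.im ^ 2)))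
          * (Real.exp (-v.re) * (‖v‖ ^ N / N.factorial) * (1 - ρ)⁻¹)
        ≤ Real.exp (-((N:ℝ)/2) * ((z - w) ^ 2).re)
          * Real.exp (-((N:ℝ) * (z.im ^ 2 + w.im ^ 2)))
          * (Real.exp (-v.re) * (Real.exp N * Real.exp ((N:ℝ) * Real.log (‖z‖))
              * Real.exp ((N:ℝ) * Real.log (‖w‖))) * d⁻¹) := by
          apply mul_le_mul_of_nonneg_left _ (by positivity)
          apply mul_le_mul
          · exact mul_le_mul_of_nonneg_left hpow (Real.exp_nonneg _)
          · exact hinv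
          · exact inv_nonneg.2 (by linarith [hρ1.le])
          · positivity
      _ = Real.exp (-((N:ℝ)/2) * ((z - w) ^ 2).re + -((N:ℝ) * (z.im ^ 2 + w.im ^ 2)) + -v.re
            + (N:ℝ) + (N:ℝ) * Real.log (‖z‖) + (N:ℝ) * Real.log (‖w‖))
            * d⁻¹ := by
          rw [Real.exp_add, Real.exp_add, Real.exp_add, Real.exp_add, Real.exp_add]
          ring
      _ ≤ Real.exp (-(d ^ 2) * N) * d⁻¹ := by
          apply mul_le_mul_of_nonneg_right _ (by positivity)
          exact Real.exp_le_exp.2 hE2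
  -- assemble
  have hGnn : 0 ≤ Gker ((Real.sqrt N : ℂ) * z) ((Real.sqrt N : ℂ) * w) := Real.sqrt_nonneg _
  have hstep : Real.exp (-((N:ℝ) / 2) * ((z - w) ^ 2).re) * (Real.sqrt N * ‖w - z‖) *
        Gker ((Real.sqrt N : ℂ) * z) ((Real.sqrt N : ℂ) * w) * ‖sN N v‖
      ≤ (Real.sqrt N * 2) * (Real.exp (-(d ^ 2) * N) + Real.exp (-(d ^ 2) * N) * d⁻¹) := by
    calc Real.exp (-((N:ℝ) / 2) * ((z - w) ^ 2).re) * (Real.sqrt N * ‖w - z‖) *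
          Gker ((Real.sqrt N : ℂ) * z) ((Real.sqrt N : ℂ) * w) * ‖sN N v‖
        ≤ Real.exp (-((N:ℝ) / 2) * ((z - w) ^ 2).re) * (Real.sqrt N * 2) *
          Real.exp (-((N:ℝ) * (z.im ^ 2 + w.im ^ 2))) *
          (1 + Real.exp (-v.re) * (‖v‖ ^ N / N.factorial) * (1 - ρ)⁻¹) := by
          have h1 : Real.exp (-((N:ℝ) / 2) * ((z - w) ^ 2).re) * (Real.sqrt N * ‖w - z‖)
              ≤ Real.exp (-((N:ℝ) / 2) * ((z - w) ^ 2).re) * (Real.sqrt N * 2) :=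
            mul_le_mul_of_nonneg_left hP (Real.exp_nonneg _)
          have h2 := mul_le_mul (mul_le_mul h1 hG hGnn (by positivity)) hsN
            (norm_nonneg _) (by positivity)
          exact h2
      _ = (Real.sqrt N * 2) * (Real.exp (-((N:ℝ) / 2) * ((z - w) ^ 2).re)
            * Real.exp (-((N:ℝ) * (z.im ^ 2 + w.im ^ 2)))
            + Real.exp (-((N:ℝ) / 2) * ((z - w) ^ 2).re)
              * Real.exp (-((N:ℝ) * (z.im ^ 2 + w.im ^ 2)))
              * (Real.exp (-v.re) * (‖v‖ ^ N / N.factorial) * (1 - ρ)⁻¹)) := by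
          ring
      _ ≤ (Real.sqrt N * 2) * (Real.exp (-(d ^ 2) * N) + Real.exp (-(d ^ 2) * N) * d⁻¹) := by
          apply mul_le_mul_of_nonneg_left _ (by positivity)
          exact add_le_add key1 hQbound
  -- final numeric bound
  have hsqrtN : Real.sqrt N ≤ (N:ℝ) := aux_sqrt_le_self hNr
  have hNE : (N:ℝ) * Real.exp (-(d ^ 2 / 2) * N) ≤ 2 / d ^ 2 := by
    have h2 : d ^ 2 / 2 * N ≤ Real.exp (d ^ 2 / 2 * N) := by
      linarith [Real.add_one_le_exp (d ^ 2 / 2 * N)]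
    have h3 : Real.exp (-(d ^ 2 / 2) * N) = (Real.exp (d ^ 2 / 2 * N))⁻¹ := by
      rw [← Real.exp_neg]
      ring_nf
    rw [h3]
    rw [mul_inv_le_iff₀ (Real.exp_pos _), mul_comm (2 / d ^ 2)]
    calc (N:ℝ) = (2 / d ^ 2) * (d ^ 2 / 2 * N) := by
          rw [show (2 / d ^ 2) * (d ^ 2 / 2 * (N:ℝ)) = (d ^ 2 / d ^ 2) * N by ring,
            div_self (show (d:ℝ) ^ 2 ≠ 0 by positivity), one_mul]
        _ ≤ (2 / d ^ 2) * Real.exp (d ^ 2 / 2 * N) := by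
          apply mul_le_mul_of_nonneg_left h2 (by positivity)
        _ = Real.exp (d ^ 2 / 2 * N) * (2 / d ^ 2) := by ring
  have hsplit2 : Real.exp (-(d ^ 2) * N)
      = Real.exp (-(d ^ 2 / 2) * N) * Real.exp (-(d ^ 2 / 2) * N) := by
    rw [← Real.exp_add]
    ring_nf
  have hfinal : (Real.sqrt N * 2) * (Real.exp (-(d ^ 2) * N) + Real.exp (-(d ^ 2) * N) * d⁻¹)
      ≤ 8 / d ^ 3 * Real.exp (-(d ^ 2 / 2) * N) := by
    have hd' : (1:ℝ) ≤ d⁻¹ := by simpa using inv_anti₀ hd0 hd1.le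
    have hb1 : (Real.sqrt N * 2) * (Real.exp (-(d ^ 2) * N) + Real.exp (-(d ^ 2) * N) * d⁻¹)
        ≤ (Real.sqrt N * 2) * (Real.exp (-(d ^ 2) * N) * (2 * d⁻¹)) := by
      apply mul_le_mul_of_nonneg_left _ (by positivity)
      have h := mul_le_mul_of_nonneg_left hd' (Real.exp_nonneg (-(d ^ 2) * N))
      rw [mul_one] at h
      have h2 : Real.exp (-(d ^ 2) * N) * (2 * d⁻¹)
          = Real.exp (-(d ^ 2) * N) * d⁻¹ + Real.exp (-(d ^ 2) * N) * d⁻¹ := by ring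
      linarith
    have hb2 : (Real.sqrt N * 2) * (Real.exp (-(d ^ 2) * N) * (2 * d⁻¹))
        = 4 * d⁻¹ * (Real.sqrt N * Real.exp (-(d ^ 2) * N)) := by ring
    have hb3 : Real.sqrt N * Real.exp (-(d ^ 2) * N)
        ≤ (2 / d ^ 2) * Real.exp (-(d ^ 2 / 2) * N) := by
      rw [hsplit2, ← mul_assoc]
      apply mul_le_mul_of_nonneg_right _ (Real.exp_nonneg _)
      calc Real.sqrt N * Real.exp (-(d ^ 2 / 2) * N)
          ≤ (N:ℝ) * Real.exp (-(d ^ 2 / 2) * N) :=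
            mul_le_mul_of_nonneg_right hsqrtN (Real.exp_nonneg _)
        _ ≤ 2 / d ^ 2 := hNE
    calc (Real.sqrt N * 2) * (Real.exp (-(d ^ 2) * N) + Real.exp (-(d ^ 2) * N) * d⁻¹)
        ≤ 4 * d⁻¹ * (Real.sqrt N * Real.exp (-(d ^ 2) * N)) := by rw [← hb2]; exact hb1
      _ ≤ 4 * d⁻¹ * ((2 / d ^ 2) * Real.exp (-(d ^ 2 / 2) * N)) := by
          apply mul_le_mul_of_nonneg_left hb3 (by positivity)
      _ = 8 / d ^ 3 * Real.exp (-(d ^ 2 / 2) * N) := by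
          field_simp
          ring
  exact hstep.trans hfinal

end AuxProof


set_option maxHeartbeats 1000000 in
/-- The kernels `D_N` and `I_N` are exponentially small on admissible domains,
with constants depending only on `d_A`. -/
theorem statement_2 :
    ∃ c C : ℝ → ℝ, ∀ A : Set ℂ, IsPlaneDomain A → IsAdmissible A →
      0 < c (dA A) ∧ 0 < C (dA A) ∧
        ∀ N : ℕ, 1 ≤ N → ∀ z ∈ A, ∀ w ∈ A,
          ‖DN N ((Real.sqrt N : ℂ) * z) ((Real.sqrt N : ℂ) * w)‖ ≤
              C (dA A) * Real.exp (-(c (dA A)) * N) ∧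
            ‖IN N ((Real.sqrt N : ℂ) * z) ((Real.sqrt N : ℂ) * w)‖ ≤
              C (dA A) * Real.exp (-(c (dA A)) * N) := by
  refine ⟨fun d => d ^ 2 / 2, fun d => 8 / d ^ 3, ?_⟩
  intro A hdom hadm
  obtain ⟨hd0, hd1, hpt⟩ := aux_dA A hdom hadm
  refine ⟨by positivity, by positivity, ?_⟩
  intro N hN z hz w hw
  obtain ⟨hz1, hz2⟩ := hpt z hz
  obtain ⟨hw1, hw2⟩ := hpt w hw
  have hNr : (0:ℝ) ≤ (N:ℝ) := Nat.cast_nonneg N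
  have h1π : 1 ≤ Real.sqrt (2 * Real.pi) := by
    rw [Real.one_le_sqrt]
    nlinarith [Real.pi_gt_three]
  have hsq : ((Real.sqrt N : ℝ) : ℂ) * ((Real.sqrt N : ℝ) : ℂ) = ((N:ℝ) : ℂ) := by
    rw [← Complex.ofReal_mul, Real.mul_self_sqrt hNr]
  have hGnn : 0 ≤ Gker ((Real.sqrt N : ℂ) * z) ((Real.sqrt N : ℂ) * w) := Real.sqrt_nonneg _
  have hsub2 : ((Real.sqrt N:ℂ) * z - (Real.sqrt N:ℂ) * w) ^ 2 = ((N:ℝ):ℂ) * (z - w) ^ 2 := by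
    calc ((Real.sqrt N:ℂ) * z - (Real.sqrt N:ℂ) * w) ^ 2
        = ((Real.sqrt N:ℂ) * (Real.sqrt N:ℂ)) * (z - w) ^ 2 := by ring
      _ = ((N:ℝ):ℂ) * (z - w) ^ 2 := by rw [hsq]
  have he : (-(1/2 : ℂ) * ((Real.sqrt N:ℂ) * z - (Real.sqrt N:ℂ) * w) ^ 2).re
      = -((N:ℝ)/2) * ((z - w) ^ 2).re := by
    rw [hsub2, show -(1/2:ℂ) * (((N:ℝ):ℂ) * (z - w) ^ 2)
      = ((-((N:ℝ)/2) : ℝ) : ℂ) * (z - w) ^ 2 by push_cast; ring]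
    simp [Complex.mul_re]
  have hZW : ((Real.sqrt N : ℂ) * z) * ((Real.sqrt N : ℂ) * w) = ((N:ℝ):ℂ) * (z * w) := by
    calc ((Real.sqrt N : ℂ) * z) * ((Real.sqrt N : ℂ) * w)
        = ((Real.sqrt N:ℂ) * (Real.sqrt N:ℂ)) * (z * w) := by ring
      _ = ((N:ℝ):ℂ) * (z * w) := by rw [hsq]
  have hv1 : ‖((Real.sqrt N : ℂ) * z) * ((Real.sqrt N : ℂ) * w)‖
      = N * ‖z * w‖ := by
    rw [hZW, norm_mul, Complex.norm_real, Real.norm_eq_abs, abs_of_nonneg hNr]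
  have hv2 : ((((Real.sqrt N : ℂ) * z) * ((Real.sqrt N : ℂ) * w))).re = N * (z * w).re := by
    rw [hZW]
    simp [Complex.mul_re]
  have p3 : ‖((Gker ((Real.sqrt N : ℂ) * z) ((Real.sqrt N : ℂ) * w) : ℝ) : ℂ)‖
      = Gker ((Real.sqrt N : ℂ) * z) ((Real.sqrt N : ℂ) * w) := by
    rw [Complex.norm_real, Real.norm_eq_abs, abs_of_nonneg hGnn]
  have p4 : ‖((Real.sqrt (2 * Real.pi) : ℝ) : ℂ)‖ = Real.sqrt (2 * Real.pi) := by
    rw [Complex.norm_real, Real.norm_eq_abs, abs_of_nonneg (Real.sqrt_nonneg _)]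
  constructor
  · -- the D_N bound
    show ‖DN N ((Real.sqrt N : ℂ) * z) ((Real.sqrt N : ℂ) * w)‖
        ≤ 8 / dA A ^ 3 * Real.exp (-(dA A ^ 2 / 2) * N)
    have p1 : ‖Complex.exp (-(1/2 : ℂ)
        * ((Real.sqrt N:ℂ) * z - (Real.sqrt N:ℂ) * w) ^ 2)‖
        = Real.exp (-((N:ℝ)/2) * ((z - w) ^ 2).re) := by
      rw [Complex.norm_exp, he]
    have p2 : ‖(Real.sqrt N:ℂ) * w - (Real.sqrt N:ℂ) * z‖
        = Real.sqrt N * ‖w - z‖ := by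
      rw [show (Real.sqrt N:ℂ) * w - (Real.sqrt N:ℂ) * z = (Real.sqrt N:ℂ) * (w - z) by ring,
        norm_mul, Complex.norm_real, Real.norm_eq_abs, abs_of_nonneg (Real.sqrt_nonneg _)]
    have hDNabs : ‖DN N ((Real.sqrt N : ℂ) * z) ((Real.sqrt N : ℂ) * w)‖
        = Real.exp (-((N:ℝ)/2) * ((z - w) ^ 2).re) / Real.sqrt (2 * Real.pi)
          * (Real.sqrt N * ‖w - z‖)
          * Gker ((Real.sqrt N : ℂ) * z) ((Real.sqrt N : ℂ) * w)
          * ‖sN N (((Real.sqrt N : ℂ) * z) * ((Real.sqrt N : ℂ) * w))‖ := by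
      unfold DN
      rw [norm_mul, norm_mul, norm_mul, norm_div, p1, p2, p3, p4]
    rw [hDNabs]
    refine le_trans ?_ (aux_master hd0 hd1 hz1 hw1 hz2 hw2 hN hv1 hv2)
    apply mul_le_mul_of_nonneg_right _ (norm_nonneg _)
    apply mul_le_mul_of_nonneg_right _ hGnn
    apply mul_le_mul_of_nonneg_right _ (by positivity)
    exact div_le_self (Real.exp_nonneg _) h1π
  · -- the I_N bound
    show ‖IN N ((Real.sqrt N : ℂ) * z) ((Real.sqrt N : ℂ) * w)‖
        ≤ 8 / dA A ^ 3 * Real.exp (-(dA A ^ 2 / 2) * N)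
    have hconj : conj ((Real.sqrt N:ℂ) * z) - conj ((Real.sqrt N:ℂ) * w)
        = conj ((Real.sqrt N:ℂ) * z - (Real.sqrt N:ℂ) * w) := (map_sub _ _ _).symm
    have p1' : ‖Complex.exp (-(1/2 : ℂ)
        * (conj ((Real.sqrt N:ℂ) * z) - conj ((Real.sqrt N:ℂ) * w)) ^ 2)‖
        = Real.exp (-((N:ℝ)/2) * ((z - w) ^ 2).re) := by
      rw [Complex.norm_exp, hconj, ← map_pow]
      have hre : (-(1/2 : ℂ)
          * conj (((Real.sqrt N:ℂ) * z - (Real.sqrt N:ℂ) * w) ^ 2)).re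
          = (-(1/2 : ℂ) * (((Real.sqrt N:ℂ) * z - (Real.sqrt N:ℂ) * w) ^ 2)).re := by
        have hc : -(1/2 : ℂ) * conj (((Real.sqrt N:ℂ) * z - (Real.sqrt N:ℂ) * w) ^ 2)
            = conj (-(1/2 : ℂ) * (((Real.sqrt N:ℂ) * z - (Real.sqrt N:ℂ) * w) ^ 2)) := by
          rw [map_mul]
          congr 1
          rw [show (-(1/2:ℂ)) = ((-(1/2:ℝ) : ℝ) : ℂ) by norm_num, Complex.conj_ofReal]
        rw [hc, Complex.conj_re]
      rw [hre, he]
    have p2' : ‖conj ((Real.sqrt N:ℂ) * z) - conj ((Real.sqrt N:ℂ) * w)‖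
        = Real.sqrt N * ‖w - z‖ := by
      rw [hconj, Complex.norm_conj,
        show (Real.sqrt N:ℂ) * z - (Real.sqrt N:ℂ) * w = (Real.sqrt N:ℂ) * (z - w) by ring,
        norm_mul, Complex.norm_real, Real.norm_eq_abs, abs_of_nonneg (Real.sqrt_nonneg _), norm_sub_rev]
    have hcm : conj ((Real.sqrt N:ℂ) * z) * conj ((Real.sqrt N:ℂ) * w)
        = conj (((Real.sqrt N:ℂ) * z) * ((Real.sqrt N:ℂ) * w)) := (map_mul _ _ _).symm
    have hv1' : ‖conj ((Real.sqrt N:ℂ) * z) * conj ((Real.sqrt N:ℂ) * w)‖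
        = N * ‖z * w‖ := by
      rw [hcm, Complex.norm_conj, hv1]
    have hv2' : (conj ((Real.sqrt N:ℂ) * z) * conj ((Real.sqrt N:ℂ) * w)).re
        = N * (z * w).re := by
      rw [hcm, Complex.conj_re, hv2]
    have hINabs : ‖IN N ((Real.sqrt N : ℂ) * z) ((Real.sqrt N : ℂ) * w)‖
        = Real.exp (-((N:ℝ)/2) * ((z - w) ^ 2).re) / Real.sqrt (2 * Real.pi)
          * (Real.sqrt N * ‖w - z‖)
          * Gker ((Real.sqrt N : ℂ) * z) ((Real.sqrt N : ℂ) * w)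
          * ‖sN N (conj ((Real.sqrt N:ℂ) * z) * conj ((Real.sqrt N:ℂ) * w))‖ := by
      unfold IN
      rw [norm_mul, norm_mul, norm_mul, norm_div, p1', p2', p3, p4]
    rw [hINabs]
    refine le_trans ?_ (aux_master hd0 hd1 hz1 hw1 hz2 hw2 hN hv1' hv2')
    apply mul_le_mul_of_nonneg_right _ (norm_nonneg _)
    apply mul_le_mul_of_nonneg_right _ hGnn
    apply mul_le_mul_of_nonneg_right _ (by positivity)
    exact div_le_self (Real.exp_nonneg _) h1π
end
end

section
/- Let k ≥ 2 be an integer, N ∈ ℕ, and let A ⊆ ℂ be a Borel set of finite Lebesgue measure. Then ∫_{A × ℂ^{k−1}} exp( −(N/2) Σ_{i=1}^k |z_i − z_{i+1}|² + iN Σ_{i=1}^k g(z_i, z_{i+1}) ) dz_1⋯dz_k = π^{k−1} N^{1−k} · area(A), where the first variable ranges over A and the remaining k−1 variables range over ℂ, z_{k+1} = z_1, each dz_i is Lebesgue measure on ℂ, and area denotes two-dimensional Lebesgue measure. -/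
open MeasureTheory ProbabilityTheory Filter Topology ComplexConjugate

noncomputable section

section AuxStatement14
open Complex

lemma cnext_eq {k : ℕ} (i : Fin (k+1)) : cnext i = i + 1 := by
  apply Fin.ext
  simp only [cnext, Fin.add_def, Fin.val_one']
  rw [Nat.add_mod_mod]

lemma sum_cnext {k : ℕ} {M : Type*} [AddCommMonoid M] (f : Fin (k+1) → M) :
    ∑ i : Fin (k+1), f (cnext i) = ∑ i, f i := by
  simp_rw [cnext_eq]
  exact Equiv.sum_comp (Equiv.addRight (1 : Fin (k+1))) f

lemma edge_eq (N : ℕ) (a b : ℂ) :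
    ((-((N:ℝ)/2) * ‖a-b‖^2 : ℝ) : ℂ) + Complex.I * (N:ℂ) * ((gfun a b : ℝ) : ℂ)
      = (N:ℂ) * (conj a * b) - ((N:ℂ)/2) * ((‖a‖ : ℝ):ℂ)^2
        - ((N:ℂ)/2) * ((‖b‖ : ℝ):ℂ)^2 := by
  have h1 : ∀ z : ℂ, (((‖z‖ : ℝ):ℂ))^2 = ((z.re^2 + z.im^2 : ℝ) : ℂ) := by
    intro z
    rw [← Complex.ofReal_pow, Complex.sq_norm, Complex.normSq_apply]
    push_cast; ring
  apply Complex.ext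
  · simp only [h1, gfun, Complex.sq_norm, Complex.normSq_apply, Complex.mul_re, Complex.mul_im,
      Complex.sub_re, Complex.sub_im, Complex.add_re, Complex.add_im, Complex.ofReal_re,
      Complex.ofReal_im, Complex.I_re, Complex.I_im, Complex.natCast_re, Complex.natCast_im,
      Complex.div_re, Complex.div_im, Complex.re_ofNat, Complex.im_ofNat, Complex.conj_re, Complex.conj_im]
    ring
  · simp only [h1, gfun, Complex.sq_norm, Complex.normSq_apply, Complex.mul_re, Complex.mul_im,
      Complex.sub_re, Complex.sub_im, Complex.add_re, Complex.add_im, Complex.ofReal_re,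
      Complex.ofReal_im, Complex.I_re, Complex.I_im, Complex.natCast_re, Complex.natCast_im,
      Complex.div_re, Complex.div_im, Complex.re_ofNat, Complex.im_ofNat, Complex.conj_re, Complex.conj_im]
    ring

lemma cycExp_eq (N k : ℕ) (z : Fin (k+1) → ℂ) :
    cycExp N (k+1) z = -(N:ℂ) * (∑ i : Fin (k+1), ((‖z i‖ : ℝ):ℂ)^2)
      + (N:ℂ) * ∑ i : Fin (k+1), conj (z i) * z (cnext i) := by
  have : cycExp N (k+1) z = ∑ i : Fin (k+1),
      (((-((N:ℝ)/2) * ‖z i - z (cnext i)‖^2 : ℝ) : ℂ)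
        + Complex.I * (N:ℂ) * ((gfun (z i) (z (cnext i)) : ℝ) : ℂ)) := by
    unfold cycExp
    simp only [Complex.ofReal_mul, Complex.ofReal_sum, Finset.mul_sum, ← Finset.sum_add_distrib]
  rw [this]
  simp_rw [edge_eq]
  simp only [Finset.sum_sub_distrib, ← Finset.mul_sum]
  rw [show ∑ i : Fin (k+1), ((‖z (cnext i)‖ : ℝ):ℂ)^2
      = ∑ i : Fin (k+1), ((‖z i‖ : ℝ):ℂ)^2 from
    sum_cnext (fun i => ((‖z i‖ : ℝ):ℂ)^2)]
  ring

lemma cycExp_one (N : ℕ) (z : Fin 1 → ℂ) : cycExp N 1 z = 0 := by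
  have h : ∀ i : Fin 1, cnext i = i := fun i => Subsingleton.elim _ _
  simp [cycExp, h, gfun]

lemma cycExp_snoc (N n : ℕ) (y : Fin (n+1) → ℂ) (w : ℂ) :
    cycExp N (n+2) (Fin.snoc y w) = cycExp N (n+1) y - (N:ℂ) * (conj (y (Fin.last n)) * y 0)
      + (-(N:ℂ) * ((‖w‖ : ℝ):ℂ)^2 + (N:ℂ) * (conj (y (Fin.last n)) * w)
         + (N:ℂ) * (conj w * y 0)) := by
  have h_last : cnext (Fin.last (n+1)) = (0 : Fin (n+2)) := by
    apply Fin.ext; simp [cnext]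
  have h_pen : cnext (Fin.castSucc (Fin.last n)) = Fin.last (n+1) := by
    apply Fin.ext; simp [cnext, Nat.mod_eq_of_lt]
  have h_mid : ∀ j : Fin n, cnext (Fin.castSucc (Fin.castSucc j)) =
      Fin.castSucc (cnext (Fin.castSucc j)) := by
    intro j
    apply Fin.ext
    simp [cnext, Nat.mod_eq_of_lt (by omega : j.val + 1 < n + 2),
      Nat.mod_eq_of_lt (by omega : j.val + 1 < n + 1)]
  have h4 : cnext (Fin.last n) = (0 : Fin (n+1)) := by
    apply Fin.ext; simp [cnext]
  have hsnoc0 : (Fin.snoc y w : Fin (n+2) → ℂ) 0 = y 0 := by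
    rw [show (0 : Fin (n+2)) = Fin.castSucc 0 from (Fin.castSucc_zero).symm, Fin.snoc_castSucc]
  rw [cycExp_eq, cycExp_eq]
  have S1 : ∑ i : Fin (n+2), ((‖(Fin.snoc y w : Fin (n+2) → ℂ) i‖ : ℝ):ℂ)^2
      = ∑ i : Fin (n+1), ((‖y i‖ : ℝ):ℂ)^2 + ((‖w‖ : ℝ):ℂ)^2 := by
    rw [Fin.sum_univ_castSucc]
    simp [Fin.snoc_castSucc, Fin.snoc_last]
  have S2 : ∑ i : Fin (n+2), conj ((Fin.snoc y w : Fin (n+2) → ℂ) i)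
        * (Fin.snoc y w : Fin (n+2) → ℂ) (cnext i)
      = (∑ i : Fin (n+1), conj (y i) * y (cnext i)) - conj (y (Fin.last n)) * y 0
        + conj (y (Fin.last n)) * w + conj w * y 0 := by
    rw [Fin.sum_univ_castSucc, Fin.sum_univ_castSucc]
    simp only [Fin.snoc_castSucc, Fin.snoc_last, h_last, h_pen, h_mid, hsnoc0]
    rw [show ∑ i : Fin (n+1), conj (y i) * y (cnext i)
        = ∑ j : Fin n, conj (y (Fin.castSucc j)) * y (cnext (Fin.castSucc j))
          + conj (y (Fin.last n)) * y (cnext (Fin.last n)) from Fin.sum_univ_castSucc _, h4]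
    ring
  rw [S1, S2]
  ring

lemma re_cycExp (N k : ℕ) (z : Fin k → ℂ) :
    (cycExp N k z).re = -((N : ℝ)/2) * ∑ i : Fin k, ‖z i - z (cnext i)‖ ^ 2 := by
  simp [cycExp, ← Complex.ofReal_pow]

lemma integrable_gauss_c {c : ℝ} (hc : 0 < c) :
    Integrable (fun v : ℂ => Real.exp (-c * ‖v‖ ^ 2)) := by
  rw [← (Complex.volume_preserving_equiv_real_prod.symm).integrable_comp_emb
    measurableEquivRealProd.symm.measurableEmbedding]
  have : (fun p : ℝ × ℝ => Real.exp (-c * ‖measurableEquivRealProd.symm p‖ ^ 2))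
      = fun p : ℝ × ℝ => Real.exp (-c * p.1^2) * Real.exp (-c * p.2^2) := by
    funext p
    rw [← Real.exp_add, Complex.sq_norm, measurableEquivRealProd_symm_apply, Complex.normSq_mk]
    ring_nf
  rw [Function.comp_def, this, Measure.volume_eq_prod]
  exact (integrable_exp_neg_mul_sq hc).mul_prod (integrable_exp_neg_mul_sq hc)

lemma path_bound (k : ℕ) (z : Fin (k+1) → ℂ) (i : Fin (k+1)) :
    ‖z i - z 0‖ ^ 2
      ≤ ((k:ℝ)+1) * ∑ j : Fin (k+1), ‖z j - z (cnext j)‖ ^ 2 := by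
  set f : ℕ → ℂ := fun m => z ⟨m % (k+1), Nat.mod_lt _ (Nat.succ_pos k)⟩ with hfdef
  have hf : ∀ j : Fin (k+1), f j.val = z j := fun j =>
    congrArg z (Fin.ext (Nat.mod_eq_of_lt j.isLt))
  have habs : ‖z i - z 0‖ ≤ ∑ j : Fin (k+1), ‖z j - z (cnext j)‖ := by
    have htel : z i - z 0 = ∑ m ∈ Finset.range i.val, (f (m+1) - f m) := by
      rw [Finset.sum_range_sub f i.val, hf i, show f 0 = z 0 from hf 0]
    calc ‖z i - z 0‖ = ‖∑ m ∈ Finset.range i.val, (f (m+1) - f m)‖ := by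
          rw [htel]
      _ ≤ ∑ m ∈ Finset.range i.val, ‖f (m+1) - f m‖ := norm_sum_le _ _
      _ ≤ ∑ m ∈ Finset.range (k+1), ‖f (m+1) - f m‖ :=
          Finset.sum_le_sum_of_subset_of_nonneg
            (Finset.range_subset_range.2 (le_of_lt i.isLt)) (fun _ _ _ => by positivity)
      _ = ∑ j : Fin (k+1), ‖f (j.val+1) - f j.val‖ :=
          (Fin.sum_univ_eq_sum_range (fun m => ‖f (m+1) - f m‖) (k+1)).symm
      _ = ∑ j : Fin (k+1), ‖z j - z (cnext j)‖ := by
          refine Finset.sum_congr rfl fun j _ => ?_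
          rw [hf j, show f (j.val + 1) = z (cnext j) from rfl, norm_sub_rev]
  calc ‖z i - z 0‖ ^ 2
      ≤ (∑ j : Fin (k+1), ‖z j - z (cnext j)‖) ^ 2 :=
        pow_le_pow_left₀ (norm_nonneg _) habs 2
    _ ≤ ((k:ℝ)+1) * ∑ j : Fin (k+1), ‖z j - z (cnext j)‖ ^ 2 := by
        have := sq_sum_le_card_mul_sum_sq
          (s := (Finset.univ : Finset (Fin (k+1))))
          (f := fun j => ‖z j - z (cnext j)‖)
        simpa using this

lemma continuous_cycExp (N k : ℕ) : Continuous fun z : Fin k → ℂ => Complex.exp (cycExp N k z) := by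
  unfold cycExp gfun
  fun_prop

lemma integrable_majorant (k : ℕ) {c : ℝ} (hc : 0 < c) {A : Set ℂ} (hA : MeasurableSet A)
    (hfin : volume A < ⊤) :
    Integrable (fun z : Fin (k+1) → ℂ =>
      A.indicator (fun _ => (1:ℝ)) (z 0) * ∏ i : Fin (k+1), Real.exp (-c * ‖z i - z 0‖^2))
      (Measure.pi fun _ => volume) := by
  have hind : Integrable (A.indicator fun _ => (1:ℝ)) volume :=
    (integrable_indicator_iff hA).2 (integrableOn_const hfin.ne)
  have hmp := (measurePreserving_piFinSuccAbove (fun _ : Fin (k+1) => (volume : Measure ℂ)) 0).symm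
  rw [← hmp.integrable_comp_emb (MeasurableEquiv.measurableEmbedding _)]
  have hcomp : ((fun z : Fin (k+1) → ℂ =>
        A.indicator (fun _ => (1:ℝ)) (z 0) * ∏ i : Fin (k+1), Real.exp (-c * ‖z i - z 0‖^2))
        ∘ (MeasurableEquiv.piFinSuccAbove (fun _ : Fin (k+1) => ℂ) 0).symm)
      = fun p : ℂ × (Fin k → ℂ) =>
        A.indicator (fun _ => (1:ℝ)) p.1 * ∏ j : Fin k, Real.exp (-c * ‖p.2 j - p.1‖^2) := by
    funext p
    simp only [Function.comp_apply, MeasurableEquiv.piFinSuccAbove_symm_apply,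
      Fin.insertNthEquiv, Equiv.coe_fn_mk, Fin.insertNth_zero, Fin.cons_zero, Fin.prod_univ_succ,
      Fin.cons_succ]
    simp [Fin.cons_zero]
  rw [hcomp]
  have hσ : MeasurePreserving (fun p : ℂ × (Fin k → ℂ) => (p.1, fun j => p.2 j + p.1))
      ((volume : Measure ℂ).prod (Measure.pi fun _ => volume))
      ((volume : Measure ℂ).prod (Measure.pi fun _ => volume)) := by
    refine MeasurePreserving.skew_product (f := id) (g := fun (a : ℂ) (y : Fin k → ℂ) (j : Fin k) => y j + a)
      (MeasurePreserving.id _) ?_ ?_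
    · exact measurable_pi_lambda _ fun j => (measurable_snd.eval.add measurable_fst)
    · refine Filter.Eventually.of_forall fun a => ?_
      exact map_add_right_eq_self (Measure.pi fun _ : Fin k => (volume : Measure ℂ))
        (fun _ => a)
  have hmeasW : Measurable (fun p : ℂ × (Fin k → ℂ) =>
      A.indicator (fun _ => (1:ℝ)) p.1 * ∏ j : Fin k, Real.exp (-c * ‖p.2 j - p.1‖^2)) := by
    apply Measurable.mul
    · exact (measurable_const.indicator hA).comp measurable_fst
    · apply Finset.measurable_prod
      intro j _
      apply Real.measurable_exp.comp
      apply Measurable.const_mul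
      apply Measurable.pow_const
      fun_prop
  have key : Integrable ((fun p : ℂ × (Fin k → ℂ) =>
      A.indicator (fun _ => (1:ℝ)) p.1 * ∏ j : Fin k, Real.exp (-c * ‖p.2 j - p.1‖^2)) ∘
      (fun p : ℂ × (Fin k → ℂ) => (p.1, fun j => p.2 j + p.1)))
      ((volume : Measure ℂ).prod (Measure.pi fun _ => volume)) := by
    have h : ((fun p : ℂ × (Fin k → ℂ) =>
        A.indicator (fun _ => (1:ℝ)) p.1 * ∏ j : Fin k, Real.exp (-c * ‖p.2 j - p.1‖^2)) ∘
        (fun p : ℂ × (Fin k → ℂ) => (p.1, fun j => p.2 j + p.1)))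
        = fun p : ℂ × (Fin k → ℂ) =>
          A.indicator (fun _ => (1:ℝ)) p.1 * ∏ j : Fin k, Real.exp (-c * ‖p.2 j‖^2) := by
      funext p
      simp [add_sub_cancel_right]
    rw [h]
    have hQ : Integrable (fun y : Fin k → ℂ => ∏ j : Fin k, Real.exp (-c * ‖y j‖ ^ 2))
        (Measure.pi fun _ => volume) := by
      have := MeasureTheory.Integrable.fintype_prod (ι := Fin k) (E := ℂ)
        (f := fun _ => fun v : ℂ => Real.exp (-c * ‖v‖ ^ 2))
        (fun _ => integrable_gauss_c hc)
      exact this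
    exact hind.mul_prod hQ
  exact (hσ.integrable_comp hmeasW.aestronglyMeasurable).1 key

lemma integrable_G (N k : ℕ) (hN : 1 ≤ N) {A : Set ℂ} (hA : MeasurableSet A)
    (hfin : volume A < ⊤) :
    Integrable (fun z : Fin (k+1) → ℂ =>
      A.indicator (fun _ => (1:ℂ)) (z 0) * Complex.exp (cycExp N (k+1) z))
      (Measure.pi fun _ => volume) := by
  have hN0 : (0:ℝ) < N := by exact_mod_cast hN
  set c : ℝ := N / (2 * ((k:ℝ)+1)^2) with hcdef
  have hc : 0 < c := by positivity
  apply Integrable.mono (integrable_majorant k hc hA hfin)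
  · exact (((measurable_const.indicator hA).comp (measurable_pi_apply 0)).mul
      (continuous_cycExp N (k+1)).measurable).aestronglyMeasurable
  · refine Filter.Eventually.of_forall fun z => ?_
    have hmajnn : 0 ≤ A.indicator (fun _ => (1:ℝ)) (z 0) *
        ∏ i : Fin (k+1), Real.exp (-c * ‖z i - z 0‖^2) :=
      mul_nonneg (Set.indicator_nonneg (fun _ _ => zero_le_one) _)
        (Finset.prod_nonneg fun _ _ => (Real.exp_pos _).le)
    rw [Real.norm_of_nonneg hmajnn, norm_mul, norm_indicator_eq_indicator_norm]
    simp only [norm_one, Complex.norm_exp]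
    apply mul_le_mul_of_nonneg_left _ (Set.indicator_nonneg (fun _ _ => zero_le_one) _)
    rw [← Real.exp_sum, Real.exp_le_exp, re_cycExp]
    set S := ∑ i : Fin (k+1), ‖z i - z (cnext i)‖ ^ 2 with hSdef
    have hS : 0 ≤ S := Finset.sum_nonneg fun _ _ => by positivity
    have h3 : ∑ i : Fin (k+1), ‖z i - z 0‖^2 ≤ ((k:ℝ)+1)^2 * S := by
      calc ∑ i : Fin (k+1), ‖z i - z 0‖^2
          ≤ ∑ _i : Fin (k+1), (((k:ℝ)+1) * S) :=
            Finset.sum_le_sum fun i _ => path_bound k z i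
        _ = ((k:ℝ)+1)^2 * S := by
            rw [Finset.sum_const, Finset.card_univ, Fintype.card_fin]
            push_cast; ring
    have hcs : c * ((k:ℝ)+1)^2 = (N:ℝ)/2 := by
      rw [hcdef]; field_simp
    calc -((N:ℝ)/2) * S = -(c * (((k:ℝ)+1)^2 * S)) := by rw [← hcs]; ring
      _ ≤ -(c * ∑ i : Fin (k+1), ‖z i - z 0‖^2) := by
          exact neg_le_neg (mul_le_mul_of_nonneg_left h3 hc.le)
      _ = ∑ i : Fin (k+1), -c * ‖z i - z 0‖^2 := by
          rw [Finset.mul_sum, ← Finset.sum_neg_distrib]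
          simp [neg_mul]


lemma gauss_c {N : ℝ} (hN : 0 < N) (a b : ℂ) :
    ∫ w : ℂ, Complex.exp (-(N:ℂ) * (‖w‖ : ℂ)^2 + N * (conj a * w) + N * (conj w * b))
      = ((Real.pi / N : ℝ) : ℂ) * Complex.exp ((N:ℂ) * (conj a * b)) := by
  have hNne : (N:ℂ) ≠ 0 := by exact_mod_cast hN.ne'
  rw [← (Complex.volume_preserving_equiv_real_prod.symm).integral_comp
    measurableEquivRealProd.symm.measurableEmbedding]
  have h1 : ∀ p : ℝ × ℝ,
      Complex.exp (-(N:ℂ) * (‖measurableEquivRealProd.symm p‖ : ℂ)^2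
        + N * (conj a * (measurableEquivRealProd.symm p))
        + N * (conj (measurableEquivRealProd.symm p) * b)) =
      Complex.exp (-(N:ℂ) * p.1 ^ 2 + (N * (conj a + b)) * p.1 + 0) *
      Complex.exp (-(N:ℂ) * p.2 ^ 2 + (N * I * (conj a - b)) * p.2 + 0) := by
    intro p
    rw [← Complex.exp_add]
    congr 1
    have hz : (measurableEquivRealProd.symm p : ℂ) = (p.1 : ℂ) + (p.2:ℂ) * I := by
      rw [measurableEquivRealProd_symm_apply]
      exact (Complex.mk_eq_add_mul_I _ _)
    have habs : ((‖measurableEquivRealProd.symm p‖ : ℂ))^2 =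
        (measurableEquivRealProd.symm p) * conj (measurableEquivRealProd.symm p) := by
      rw [Complex.mul_conj]
      norm_cast
      exact Complex.sq_norm _
    rw [habs, hz]
    simp only [map_add, map_mul, Complex.conj_I, Complex.conj_ofReal]
    ring_nf
    rw [Complex.I_sq]
    ring
  simp only [h1]
  rw [Measure.volume_eq_prod,
    integral_prod_mul (f := fun x : ℝ => Complex.exp (-(N:ℂ) * x ^ 2 + N * (conj a + b) * x + 0))
      (g := fun y : ℝ => Complex.exp (-(N:ℂ) * y ^ 2 + N * I * (conj a - b) * y + 0)),
    integral_cexp_quadratic (by simpa using hN : (-(N:ℂ)).re < 0),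
    integral_cexp_quadratic (by simpa using hN : (-(N:ℂ)).re < 0)]
  have hpin : ((Real.pi:ℂ) / N) ≠ 0 := by
    apply div_ne_zero _ hNne
    exact_mod_cast Real.pi_ne_zero
  have : ((Real.pi:ℂ) / -(-(N:ℂ))) ^ (1/2 : ℂ) * ((Real.pi:ℂ) / -(-(N:ℂ))) ^ (1/2 : ℂ)
      = ((Real.pi:ℂ)/N) := by
    rw [neg_neg, ← Complex.cpow_add _ _ hpin]
    norm_num
  calc ((Real.pi:ℂ) / -(-(N:ℂ))) ^ (1/2:ℂ) * Complex.exp (0 - (N * (conj a + b))^2 / (4 * -(N:ℂ)))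
        * (((Real.pi:ℂ) / -(-(N:ℂ))) ^ (1/2:ℂ) * Complex.exp (0 - (N * I * (conj a - b))^2 / (4 * -(N:ℂ))))
      = (((Real.pi:ℂ) / -(-(N:ℂ))) ^ (1/2:ℂ) * ((Real.pi:ℂ) / -(-(N:ℂ))) ^ (1/2:ℂ))
        * (Complex.exp (0 - (N * (conj a + b))^2 / (4 * -(N:ℂ)))
           * Complex.exp (0 - (N * I * (conj a - b))^2 / (4 * -(N:ℂ)))) := by ring
    _ = ((Real.pi/N : ℝ):ℂ) * Complex.exp ((N:ℂ) * (conj a * b)) := by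
        rw [this, ← Complex.exp_add]
        push_cast
        congr 2
        have : (N * I * (conj a - b))^2 = - (N * (conj a - b))^2 := by
          rw [mul_pow, mul_pow, Complex.I_sq]; ring
        rw [this]
        field_simp
        ring


lemma main_integral (N : ℕ) (hN : 1 ≤ N) {A : Set ℂ} (hA : MeasurableSet A)
    (hfin : volume A < ⊤) (n : ℕ) :
    ∫ z : Fin (n+1) → ℂ,
        A.indicator (fun _ => (1:ℂ)) (z 0) * Complex.exp (cycExp N (n+1) z)
        ∂(Measure.pi fun _ => volume)
      = (((Real.pi / (N:ℝ)) ^ n * (volume A).toReal : ℝ) : ℂ) := by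
  have hN0 : (0:ℝ) < N := by exact_mod_cast hN
  induction n with
  | zero =>
      show (∫ z : Fin 1 → ℂ, A.indicator (fun _ => (1:ℂ)) (z 0) * Complex.exp (cycExp N 1 z)
          ∂(Measure.pi fun _ => volume)) = _
      simp only [cycExp_one, Complex.exp_zero, mul_one, pow_zero, one_mul]
      have h0 : ∀ z : Fin 1 → ℂ, z 0 = z default := fun z => congrArg z (Subsingleton.elim _ _)
      simp_rw [h0]
      have hfu := (measurePreserving_funUnique (volume : Measure ℂ) (Fin 1)).integral_comp
        (MeasurableEquiv.measurableEmbedding _) (fun a : ℂ => A.indicator (fun _ => (1:ℂ)) a)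
      calc (∫ z : Fin 1 → ℂ, A.indicator (fun _ => (1:ℂ)) (z default)
              ∂(Measure.pi fun _ => volume))
          = ∫ a : ℂ, A.indicator (fun _ => (1:ℂ)) a := hfu
        _ = (((volume A).toReal : ℝ) : ℂ) := by
            rw [integral_indicator_const (1:ℂ) hA]; simp [Measure.real]
  | succ n ih =>
      have hmp := measurePreserving_piFinSuccAbove
        (fun _ : Fin (n+2) => (volume : Measure ℂ)) (Fin.last (n+1))
      set e := MeasurableEquiv.piFinSuccAbove (fun _ : Fin (n+2) => ℂ) (Fin.last (n+1)) with he
      set G : (Fin (n+2) → ℂ) → ℂ :=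
        fun z => A.indicator (fun _ => (1:ℂ)) (z 0) * Complex.exp (cycExp N (n+2) z) with hGdef
      have hint : Integrable G (Measure.pi fun _ => volume) := integrable_G N (n+1) hN hA hfin
      have hintc : Integrable (G ∘ e.symm)
          ((volume : Measure ℂ).prod (Measure.pi fun _ => volume)) :=
        ((hmp.symm).integrable_comp_emb e.symm.measurableEmbedding).2 hint
      have h1 : ∫ z : Fin (n+2) → ℂ, G z ∂(Measure.pi fun _ => volume)
          = ∫ p : ℂ × (Fin (n+1) → ℂ), (G ∘ e.symm) p
              ∂((volume : Measure ℂ).prod (Measure.pi fun _ => volume)) :=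
        ((hmp.symm).integral_comp e.symm.measurableEmbedding G).symm
      have hsnoc : ∀ (w : ℂ) (y : Fin (n+1) → ℂ), e.symm (w, y) = Fin.snoc y w := by
        intro w y
        simp [he, MeasurableEquiv.piFinSuccAbove_symm_apply, Fin.insertNthEquiv,
          Fin.insertNth_last']
      have hsnoc0 : ∀ (w : ℂ) (y : Fin (n+1) → ℂ), (Fin.snoc y w : Fin (n+2) → ℂ) 0 = y 0 := by
        intro w y
        rw [show (0 : Fin (n+2)) = Fin.castSucc 0 from (Fin.castSucc_zero).symm, Fin.snoc_castSucc]
      have hinner : ∀ y : Fin (n+1) → ℂ,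
          ∫ w : ℂ, (G ∘ e.symm) (w, y)
            = ((Real.pi / (N:ℝ) : ℝ):ℂ) *
                (A.indicator (fun _ => (1:ℂ)) (y 0) * Complex.exp (cycExp N (n+1) y)) := by
        intro y
        have hg := gauss_c (N := (N:ℝ)) hN0 (y (Fin.last n)) (y 0)
        push_cast at hg
        calc ∫ w : ℂ, (G ∘ e.symm) (w, y)
            = ∫ w : ℂ, (A.indicator (fun _ => (1:ℂ)) (y 0) *
                Complex.exp (cycExp N (n+1) y - (N:ℂ) * (conj (y (Fin.last n)) * y 0))) *
                Complex.exp (-(N:ℂ) * ((‖w‖ : ℝ):ℂ)^2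
                  + (N:ℂ) * (conj (y (Fin.last n)) * w) + (N:ℂ) * (conj w * y 0)) := by
              apply integral_congr_ae
              refine Filter.Eventually.of_forall fun w => ?_
              simp only [Function.comp_apply, hsnoc, hGdef, hsnoc0, cycExp_snoc,
                Complex.exp_add]
              ring
          _ = (A.indicator (fun _ => (1:ℂ)) (y 0) *
                Complex.exp (cycExp N (n+1) y - (N:ℂ) * (conj (y (Fin.last n)) * y 0))) *
              (((Real.pi / (N:ℝ) : ℝ):ℂ) *
                Complex.exp ((N:ℂ) * (conj (y (Fin.last n)) * y 0))) := by
              rw [integral_const_mul, hg]; norm_cast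
          _ = ((Real.pi / (N:ℝ) : ℝ):ℂ) *
                (A.indicator (fun _ => (1:ℂ)) (y 0) * Complex.exp (cycExp N (n+1) y)) := by
              have hexp : Complex.exp (cycExp N (n+1) y
                    - (N:ℂ) * (conj (y (Fin.last n)) * y 0)) *
                  Complex.exp ((N:ℂ) * (conj (y (Fin.last n)) * y 0))
                  = Complex.exp (cycExp N (n+1) y) := by
                rw [← Complex.exp_add]; congr 1; ring
              rw [← hexp]; ring
      rw [h1, integral_prod_symm _ hintc]
      simp_rw [hinner]
      rw [integral_const_mul, ih]
      push_cast
      ring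

end AuxStatement14

/-- Exact evaluation of the leading cyclic Gaussian integral:
`∫_{A × ℂ^{k-1}} exp(-(N/2) ∑ |z_i - z_{i+1}|² + iN ∑ g(z_i, z_{i+1})) dz
  = π^{k-1} N^{1-k} area(A)`. -/
theorem statement_14 (k : ℕ) (hk : 2 ≤ k) (N : ℕ) (hN : 1 ≤ N)
    (A : Set ℂ) (hA : MeasurableSet A) (hfin : volume A < ⊤) :
    (∫ z : Fin k → ℂ in {z : Fin k → ℂ | z ⟨0, by omega⟩ ∈ A},
        Complex.exp (cycExp N k z) ∂(Measure.pi fun _ => volume)) =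
      (((Real.pi / (N : ℝ)) ^ (k - 1) * (volume A).toReal : ℝ) : ℂ) := by
  obtain ⟨n, rfl⟩ : ∃ n, k = n + 1 := ⟨k - 1, by omega⟩
  simp only [Fin.zero_eta]
  have hset : MeasurableSet {z : Fin (n+1) → ℂ | z 0 ∈ A} := (measurable_pi_apply 0) hA
  rw [← integral_indicator hset]
  have hind : ∀ z : Fin (n+1) → ℂ,
      Set.indicator {z : Fin (n+1) → ℂ | z 0 ∈ A}
        (fun z => Complex.exp (cycExp N (n+1) z)) z
      = A.indicator (fun _ => (1:ℂ)) (z 0) * Complex.exp (cycExp N (n+1) z) := by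
    intro z
    by_cases h : z 0 ∈ A
    · rw [Set.indicator_of_mem (by exact h), Set.indicator_of_mem h, one_mul]
    · rw [Set.indicator_of_notMem (by exact h), Set.indicator_of_notMem h, zero_mul]
  simp_rw [hind]
  rw [main_integral N hN hA hfin n]
  norm_num
end
end
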